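/- Let 2 ≤ c, o ≤ N be vehicle indices, let m = min(c,o), and let M_{c,o} be the principal submatrix of the reduced Laplacian L̄ obtained by deleting the rows and columns corresponding to all vehicles m, m+1, …, max(c,o) (the vehicles on the path between c and o). Define the steady-state gain T_{c,o}(0) = w_{c,o} · det(M_{c,o}) / det(L̄). Then T_{c,o}(0) = w_{c,o}·(1 + Σ_{i=1}^{c−2} ∏_{j=1}^{i} ε_{c−j}) if c ≤ o, and T_{c,o}(0) = w_{c,o}·(1 + Σ_{i=1}^{o−2} ∏_{j=1}^{i} ε_{o−j}) if o < c. -/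

import Mathlib

/-!
The reduced Laplacian is tridiagonal: diagonal `1 + ε_v` (and `1` in the last row), and the two
off-diagonal entries coupling vehicles `v` and `v + 1` multiply to `ε_v`. Its leading principal
minors `K_k` therefore satisfy the continuant recurrence
`K_{k+2} = (1 + ε) K_{k+1} - ε K_k`, along which `K_{k+1} - ε K_k` stays equal to `1`; this gives
the Horner form `K_{k+1} = 1 + ε K_k`, and where the diagonal drops to `1` it gives `K = 1`, so
`det L̄ = 1`. Deleting the vehicles from `min c o` to `max c o` decouples `M_{c,o}` into a
leading principal minor of `L̄`, whose Horner expansion is the claimed sum, and the reduced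
Laplacian of the tail of the platoon, of determinant `1`.
-/

/-- The platoon Laplacian: an `N × N` real matrix (rows/columns `0, …, N-1`
correspond to vehicles `1, …, N`). -/
def platoonL (N : ℕ) (ε : ℕ → ℝ) : Matrix (Fin N) (Fin N) ℝ :=
  fun i j =>
    if i.val = 0 then 0
    else if i.val = N - 1 then
      (if j.val = N - 2 then -1 else if j = i then 1 else 0)
    else
      if j.val = i.val - 1 then -1
      else if j = i then 1 + ε (i.val + 1)
      else if j.val = i.val + 1 then -(ε (i.val + 1))
      else 0

/-- The reduced Laplacian: the platoon Laplacian with its first row and first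
column deleted. Its index `i : Fin (N-1)` corresponds to vehicle `i + 2`. -/
def reducedL (N : ℕ) (ε : ℕ → ℝ) : Matrix (Fin (N - 1)) (Fin (N - 1)) ℝ :=
  (platoonL N ε).submatrix
    (fun i => ⟨i.val + 1, by have := i.isLt; omega⟩)
    (fun i => ⟨i.val + 1, by have := i.isLt; omega⟩)

/-- Path weight: `1` if `c ≤ o`, and `∏_{i=o}^{c-1} ε_i` if `c > o`. -/
noncomputable def pathWeight (ε : ℕ → ℝ) (c o : ℕ) : ℝ :=
  if c ≤ o then 1 else ∏ i ∈ Finset.Icc o (c - 1), ε i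

/-- The principal submatrix of the reduced Laplacian obtained by deleting the
rows and columns of all vehicles `min c o, …, max c o` (the vehicles on the
path between `c` and `o`; vehicle `v` corresponds to index `v - 2`). -/
def pathSub (N : ℕ) (ε : ℕ → ℝ) (c o : ℕ) :
    Matrix (Fin (N - 1 - (max c o - min c o + 1)))
      (Fin (N - 1 - (max c o - min c o + 1))) ℝ :=
  (reducedL N ε).submatrix
    (fun i => if i.val < min c o - 2 then ⟨i.val, by have := i.isLt; omega⟩
      else ⟨i.val + (max c o - min c o + 1), by have := i.isLt; omega⟩)
    (fun i => if i.val < min c o - 2 then ⟨i.val, by have := i.isLt; omega⟩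
      else ⟨i.val + (max c o - min c o + 1), by have := i.isLt; omega⟩)

open Finset

variable {R : Type*} [CommRing R]

def tridiag (d u l : ℕ → R) (n : ℕ) : Matrix (Fin n) (Fin n) R :=
  fun i j =>
    if (i : ℕ) = j then d i
    else if (i : ℕ) + 1 = j then u i
    else if (j : ℕ) + 1 = i then l j
    else 0

def continuant (d p : ℕ → R) : ℕ → R
  | 0 => 1
  | 1 => d 0
  | n + 2 => d (n + 1) * continuant d p (n + 1) - p n * continuant d p n

section Tridiag

variable (d u l : ℕ → R)

theorem tridiag_apply_eq_zero {n : ℕ} {i j : Fin n} (h : (i : ℕ) + 1 < j ∨ (j : ℕ) + 1 < i) :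
    tridiag d u l n i j = 0 := by
  unfold tridiag
  split_ifs <;> first | rfl | omega

theorem tridiag_submatrix_castSucc (n : ℕ) :
    (tridiag d u l (n + 1)).submatrix Fin.castSucc Fin.castSucc = tridiag d u l n := by
  ext i j
  simp [tridiag]

/-- Laplace expansion along the last row; the minor of the subdiagonal entry is expanded
along its last column, where only `u n` survives. -/
theorem det_tridiag : ∀ n, (tridiag d u l n).det = continuant d (u * l) n
  | 0 => by simp [continuant]
  | 1 => by simp [continuant, tridiag]
  | n + 2 => by
    have hminor : ((tridiag d u l (n + 2)).submatrix (Fin.last (n + 1)).succAbove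
        (Fin.last n).castSucc.succAbove).det = u n * (tridiag d u l n).det := by
      rw [Matrix.det_succ_column _ (Fin.last n), Fin.sum_univ_castSucc, sum_eq_zero]
      · have hsub : (tridiag d u l (n + 2)).submatrix (Fin.castSucc ∘ Fin.castSucc)
            ((Fin.last n).castSucc.succAbove ∘ Fin.castSucc) = tridiag d u l n := by
          ext i j
          have hj : (j.castSucc).castSucc < (Fin.last n).castSucc :=
            Fin.castSucc_lt_castSucc_iff.2 (Fin.castSucc_lt_last j)
          simp [tridiag, Fin.succAbove_of_castSucc_lt _ _ hj]
        simp [Fin.succAbove_last, hsub, tridiag]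
      · intro i _
        rw [Matrix.submatrix_apply, tridiag_apply_eq_zero _ _ _ (by simp [Fin.succAbove_last])]
        ring
    rw [Matrix.det_succ_row _ (Fin.last (n + 1)), Fin.sum_univ_castSucc, Fin.sum_univ_castSucc,
      sum_eq_zero, hminor]
    · simp [continuant, Fin.succAbove_last, tridiag_submatrix_castSucc, det_tridiag n,
        det_tridiag (n + 1), tridiag, show n + 1 + 1 ≠ n by omega]
      ring
    · intro j _
      rw [tridiag_apply_eq_zero _ _ _ (by simp)]
      ring

end Tridiag

theorem continuant_congr {d d' p p' : ℕ → R} :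
    ∀ {n : ℕ}, (∀ i < n, d i = d' i) → (∀ i, i + 1 < n → p i = p' i) →
      continuant d p n = continuant d' p' n
  | 0, _, _ => rfl
  | 1, hd, _ => by simp [continuant, hd 0 one_pos]
  | n + 2, hd, hp => by
    rw [continuant, continuant, hd (n + 1) (by omega), hp n (by omega),
      continuant_congr (n := n + 1) (fun i hi => hd i (by omega)) (fun i hi => hp i (by omega)),
      continuant_congr (n := n) (fun i hi => hd i (by omega)) (fun i hi => hp i (by omega))]

theorem one_add_sum_prod_succ (a : ℕ → R) (n : ℕ) :
    1 + ∑ i ∈ Icc 1 (n + 1), ∏ j ∈ Icc 1 i, a (n + 1 - j) =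
      1 + a n * (1 + ∑ i ∈ Icc 1 n, ∏ j ∈ Icc 1 i, a (n - j)) := by
  have hsum (f : ℕ → R) (m : ℕ) : ∑ i ∈ Icc 1 m, f i = ∑ i ∈ range m, f (i + 1) := by
    rw [range_eq_Ico, sum_Ico_add', Ico_add_one_right_eq_Icc]
  have hprod (f : ℕ → R) (m : ℕ) : ∏ i ∈ Icc 1 m, f i = ∏ i ∈ range m, f (i + 1) := by
    rw [range_eq_Ico, prod_Ico_add', Ico_add_one_right_eq_Icc]
  simp only [hsum, hprod, Nat.add_sub_add_right]
  rw [sum_range_succ']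
  simp only [prod_range_succ' _ (_ + 1), Nat.sub_zero, mul_add, mul_sum]
  simp [mul_comm, add_comm]

section Continuant

variable (d p : ℕ → R)

theorem continuant_add {t : ℕ} (hp : ∀ i, i + 1 = t → p i = 0) :
    ∀ n, continuant d p (t + n) =
      continuant d p t * continuant (fun i => d (t + i)) (fun i => p (t + i)) n
  | 0 => by simp [continuant]
  | 1 => by
    rcases t with _ | s
    · simp [continuant]
    · simp [continuant, hp s rfl, mul_comm]
  | n + 2 => by
    rw [← add_assoc, continuant, add_assoc, continuant_add hp (n + 1), continuant_add hp n,
      continuant]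
    ring

theorem continuant_succ_eq_one_add_mul {k : ℕ} (hd : ∀ i ≤ k, d i = 1 + p i) :
    continuant d p (k + 1) = 1 + p k * continuant d p k := by
  induction k with
  | zero => simp [continuant, hd 0 le_rfl]
  | succ k ih =>
    rw [continuant, hd (k + 1) le_rfl, ih fun i hi => hd i (by omega)]
    ring

theorem continuant_eq_one {n : ℕ} (hd : ∀ i, i + 1 < n → d i = 1 + p i)
    (hlast : ∀ i, i + 1 = n → d i = 1) : continuant d p n = 1 := by
  match n with
  | 0 => rfl
  | 1 => simp [continuant, hlast 0 rfl]
  | k + 2 =>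
    rw [continuant, hlast (k + 1) rfl,
      continuant_succ_eq_one_add_mul d p fun i hi => hd i (by omega)]
    ring

theorem continuant_eq_one_add_sum_prod {n : ℕ} (hd : ∀ i < n, d i = 1 + p i) :
    continuant d p n = 1 + ∑ i ∈ Icc 1 n, ∏ j ∈ Icc 1 i, p (n - j) := by
  induction n with
  | zero => simp [continuant]
  | succ n ih =>
    rw [continuant_succ_eq_one_add_mul d p fun i hi => hd i (by omega),
      ih fun i hi => hd i (by omega), one_add_sum_prod_succ]

end Continuant

theorem det_tridiag_submatrix_of_gap (d u l : ℕ → R) {n m t g : ℕ} (hg : 0 < g) (ht : t ≤ m)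
    (f : Fin m → Fin n) (hf : ∀ i, (f i : ℕ) = if (i : ℕ) < t then (i : ℕ) else i + g) :
    ((tridiag d u l n).submatrix f f).det =
      continuant d (u * l) t *
        continuant (fun i => d (t + g + i)) (fun i => (u * l) (t + g + i)) (m - t) := by
  set r : ℕ → ℕ := fun i => if i < t then i else i + g
  have hsub : (tridiag d u l n).submatrix f f = tridiag (fun i => d (r i))
      (fun i => if i + 1 = t then 0 else u (r i)) (fun i => if i + 1 = t then 0 else l (r i))
      m := by
    ext i j
    simp only [Matrix.submatrix_apply, tridiag, hf, r]
    split_ifs <;> first | rfl | omega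
  obtain ⟨k, rfl⟩ := Nat.exists_eq_add_of_le ht
  rw [hsub, det_tridiag, continuant_add _ _ (fun i hi => by simp [hi]), Nat.add_sub_cancel_left]
  congr 1
  · refine continuant_congr (fun i hi => ?_) (fun i hi => ?_)
    · simp [r, hi]
    · simp [r, show i < t by omega, show i + 1 ≠ t by omega]
  · refine continuant_congr (fun i _ => ?_) (fun i _ => ?_)
    · simp [r, add_right_comm]
    · simp [r, add_right_comm, show t + i + 1 ≠ t by omega]

theorem reducedL_eq_tridiag (N : ℕ) (ε : ℕ → ℝ) :
    reducedL N ε =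
      tridiag (fun i => if i + 2 = N then 1 else 1 + ε (i + 2)) (fun i => -ε (i + 2))
        (fun _ => -1) (N - 1) := by
  ext i j
  have := i.2
  have := j.2
  simp only [reducedL, Matrix.submatrix_apply, platoonL, tridiag, Fin.ext_iff]
  split_ifs <;> first | rfl | contradiction | omega

theorem det_reducedL (N : ℕ) (ε : ℕ → ℝ) : (reducedL N ε).det = 1 := by
  rw [reducedL_eq_tridiag, det_tridiag]
  apply continuant_eq_one
  · intro i hi
    simp [show i + 2 ≠ N by omega]
  · intro i hi
    simp [show i + 2 = N by omega]

theorem det_pathSub (N : ℕ) (ε : ℕ → ℝ) {c o : ℕ} (hcN : c ≤ N) (hoN : o ≤ N) :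
    (pathSub N ε c o).det = 1 + ∑ i ∈ Icc 1 (min c o - 2), ∏ j ∈ Icc 1 i, ε (min c o - j) := by
  rw [pathSub, reducedL_eq_tridiag, det_tridiag_submatrix_of_gap (t := min c o - 2)
    (g := max c o - min c o + 1) _ _ _ (Nat.succ_pos _) (by omega) _
    (fun i => by split_ifs <;> rfl)]
  rw [continuant_eq_one_add_sum_prod _ _ (fun i hi => ?_),
    continuant_eq_one _ _ (fun i hi => ?_) (fun i hi => ?_), mul_one]
  · refine congrArg _ (sum_congr rfl fun i hi => prod_congr rfl fun j hj => ?_)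
    simp only [mem_Icc] at hi hj
    simp only [Pi.mul_apply, neg_mul_neg, mul_one]
    congr 1
    omega
  · simp [show min c o - 2 + (max c o - min c o + 1) + i + 2 ≠ N by omega]
  · simp [show min c o - 2 + (max c o - min c o + 1) + i + 2 = N by omega]
  · simp [show i + 2 ≠ N by omega]

theorem platoon_steady_state_gain_general
    (N : ℕ) (ε : ℕ → ℝ)
    (c o : ℕ) (hcN : c ≤ N) (hoN : o ≤ N) :
    pathWeight ε c o * (pathSub N ε c o).det / (reducedL N ε).det =
      if c ≤ o then
        pathWeight ε c o *
          (1 + ∑ i ∈ Finset.Icc 1 (c - 2), ∏ j ∈ Finset.Icc 1 i, ε (c - j))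
      else
        pathWeight ε c o *
          (1 + ∑ i ∈ Finset.Icc 1 (o - 2), ∏ j ∈ Finset.Icc 1 i, ε (o - j)) := by
  rw [det_reducedL, div_one, det_pathSub N ε hcN hoN]
  split_ifs with h
  · rw [min_eq_left h]
  · rw [min_eq_right (by omega)]

/-- The steady-state gain `T_{c,o}(0) = w_{c,o} · det(M_{c,o}) / det(L̄)`
equals `w_{c,o}·(1 + Σ_{i=1}^{m-2} ∏_{j=1}^{i} ε_{m-j})`, where `m = min c o`. -/
theorem platoon_steady_state_gain
    (N : ℕ) (hN : 2 ≤ N) (ε : ℕ → ℝ)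
    (hε : ∀ i, 2 ≤ i → i ≤ N - 1 → 0 ≤ ε i)
    (c o : ℕ) (hc2 : 2 ≤ c) (hcN : c ≤ N) (ho2 : 2 ≤ o) (hoN : o ≤ N) :
    pathWeight ε c o * (pathSub N ε c o).det / (reducedL N ε).det =
      if c ≤ o then
        pathWeight ε c o *
          (1 + ∑ i ∈ Finset.Icc 1 (c - 2), ∏ j ∈ Finset.Icc 1 i, ε (c - j))
      else
        pathWeight ε c o *
          (1 + ∑ i ∈ Finset.Icc 1 (o - 2), ∏ j ∈ Finset.Icc 1 i, ε (o - j)) :=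
  platoon_steady_state_gain_general N ε c o hcN hoN
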